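/- (Lemma P1: conditional probability of non-discriminating parity bits.) In the uniform message model, fix a j-pattern sequence s (values read as message indices in {1,…,K}, K ≥ n ≥ j), the events A_{q,s} as in Lemma P, an index q ∈ {1,…,j−1}, and a nonempty set Q ⊆ {1,…,q−1} such that s(k) = s(q) for every k ∈ Q; let p = max Q. Then (a) ⋂_{k∈Q} A_{k,s} = A_{p,s} and A_{q,s} ⊆ A_{p,s}; and (b) Pr( A_{q,s} | ⋂_{k∈Q} A_{k,s} ) = 2^(−( Σ_{ℓ∈{0,…,q−1}, s(ℓ)≠s(q)} m(ℓ) − Σ_{k∈{0,…,p−1}, s(k)≠s(p)} m(k) )). -/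

import Mathlib

/-!
Let `p = max Q`. Since `s` is constant on `Q ∪ {q}`, all the events `A_k`, `k ∈ Q ∪ {q}`, test
the same message `r = s q`, and a later one imposes every constraint of an earlier one; so the
intersection is `A_p ⊇ A_q`. Moreover `A_q` is `A_p` together with the requirements that the
fragments `W_r(ℓ)` with `p ≤ ℓ < q`, `s ℓ ≠ s q`, be copies of the fragments `W_{s ℓ}(ℓ)` of
other messages. `A_p` does not constrain these fragments of `W_r` at all, so overwriting them is
a bijection between `A_p` and `A_q × ∏_ℓ F₂^{m ℓ}`, and the conditional probability is
`2^{-∑ m ℓ}` over these `ℓ`, which is the stated difference of the two sums.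
-/

/-- A `j`-pattern sequence: `s 0 = 1` and each subsequent value is either `ℓ + 1`
(a fresh label) or equal to an earlier value. -/
def IsPatternSeq (j : ℕ) (s : Fin j → ℕ) : Prop :=
  (∀ h0 : 0 < j, s ⟨0, h0⟩ = 1) ∧
  ∀ ℓ : Fin j, 1 ≤ ℓ.val → (s ℓ = ℓ.val + 1 ∨ ∃ q : Fin j, q < ℓ ∧ s ℓ = s q)

/-- A message tuple: `K` messages, each consisting of `n` fragments, the `ℓ`-th
fragment being a row vector in `F₂^{m ℓ}`. -/
abbrev MsgTuple (K n : ℕ) (m : Fin n → ℕ) : Type :=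
  Fin K → (ℓ : Fin n) → Fin (m ℓ) → ZMod 2

/-- The event `A_{q,s}` that the parity bits of sub-block `q` are non-discriminating
for the pattern sequence `s`: every fragment of message `s q` preceding slot `q` that
belongs to a different level matches the corresponding fragment on the path. -/
def nonDiscEvent (K n j : ℕ) (hjn : j ≤ n) (m : Fin n → ℕ) (s : Fin j → ℕ)
    (hsK : ∀ ℓ : Fin j, s ℓ - 1 < K) (q : Fin j) : Set (MsgTuple K n m) :=
  {W | ∀ ℓ : Fin j, ℓ < q → s ℓ ≠ s q →
      W ⟨s q - 1, hsK q⟩ (Fin.castLE hjn ℓ) = W ⟨s ℓ - 1, hsK ℓ⟩ (Fin.castLE hjn ℓ)}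

open Finset

section UpdateRowOn

variable {α γ : Type*} {β : γ → Type*} [DecidableEq α] [DecidableEq γ]

def updateRowOn (x : α → (b : γ) → β b) (r : α) (T : Finset γ) (g : (b : T) → β b) :
    α → (b : γ) → β b :=
  Function.update x r fun b => if h : b ∈ T then g ⟨b, h⟩ else x r b

variable {x : α → (b : γ) → β b} {r : α} {T : Finset γ} {g : (b : T) → β b}

lemma updateRowOn_of_mem {b : γ} (hb : b ∈ T) : updateRowOn x r T g r b = g ⟨b, hb⟩ := by
  simp [updateRowOn, hb]

lemma updateRowOn_of_ne {a : α} (ha : a ≠ r) (b : γ) : updateRowOn x r T g a b = x a b := by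
  simp [updateRowOn, ha]

lemma updateRowOn_of_notMem (a : α) {b : γ} (hb : b ∉ T) : updateRowOn x r T g a b = x a b := by
  by_cases ha : a = r
  · subst ha; simp [updateRowOn, hb]
  · exact updateRowOn_of_ne ha b

@[simp]
lemma updateRowOn_updateRowOn (g' : (b : T) → β b) :
    updateRowOn (updateRowOn x r T g) r T g' = updateRowOn x r T g' := by
  simp only [updateRowOn, Function.update_idem, Function.update_self]
  congr 1 with b
  split_ifs <;> rfl

@[simp]
lemma updateRowOn_self : updateRowOn x r T (fun b => x r b) = x := by
  ext a b
  by_cases ha : a = r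
  · subst ha; by_cases hb : b ∈ T <;> simp [updateRowOn]
  · exact updateRowOn_of_ne ha b

theorem card_eq_card_inter_copies_mul (E : Set (α → (b : γ) → β b)) (r : α) (T : Finset γ)
    (σ : γ → α) (hσ : ∀ b ∈ T, σ b ≠ r) (hE : ∀ x ∈ E, ∀ g, updateRowOn x r T g ∈ E) :
    Nat.card E = Nat.card ↥(E ∩ {x | ∀ b ∈ T, x r b = x (σ b) b}) * ∏ b ∈ T, Nat.card (β b) := by
  let e : E ≃ ↥(E ∩ {x | ∀ b ∈ T, x r b = x (σ b) b}) × ((b : T) → β b) :=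
    { toFun := fun x =>
        (⟨updateRowOn x r T (fun b => x.1 (σ b) b), hE _ x.2 _, fun b hb => by
            rw [updateRowOn_of_mem hb, updateRowOn_of_ne (hσ b hb)]⟩,
          fun b => x.1 r b)
      invFun := fun yg => ⟨updateRowOn yg.1 r T yg.2, hE _ yg.1.2.1 _⟩
      left_inv := fun x => by simp
      right_inv := by
        rintro ⟨⟨y, hyE, hycopy⟩, g⟩
        refine Prod.ext (Subtype.ext ?_) (funext fun b => updateRowOn_of_mem b.2)
        have hcopy : (fun b : T => updateRowOn y r T g (σ b) b) = fun b : T => y r b :=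
          funext fun b => by rw [updateRowOn_of_ne (hσ b b.2), hycopy b b.2]
        simp [hcopy] }
  rw [Nat.card_congr e, Nat.card_prod, Nat.card_pi, prod_coe_sort T fun b => Nat.card (β b)]

end UpdateRowOn

lemma sum_filter_lt_ne_eq_add {ι κ M : Type*} [Fintype ι] [LinearOrder ι] [DecidableEq κ]
    [AddCommMonoid M] (s : ι → κ) (f : ι → M) {p q : ι} (hpq : p ≤ q) (hsp : s p = s q) :
    ∑ ℓ with ℓ < q ∧ s ℓ ≠ s q, f ℓ
      = ∑ ℓ with ℓ < p ∧ s ℓ ≠ s p, f ℓ + ∑ ℓ with p ≤ ℓ ∧ ℓ < q ∧ s ℓ ≠ s q, f ℓ := by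
  rw [← sum_filter_add_sum_filter_not _ (· < p), filter_filter, filter_filter]
  congr 2 <;> ext ℓ <;> simp only [mem_filter, mem_univ, true_and, not_lt, hsp]
  · have := fun h : ℓ < p => h.trans_le hpq
    tauto
  · tauto

lemma IsPatternSeq.one_le {j : ℕ} {s : Fin j → ℕ} (hs : IsPatternSeq j s) (ℓ : Fin j) :
    1 ≤ s ℓ := by
  induction ℓ using WellFoundedLT.induction with
  | _ ℓ ih =>
    rcases Nat.eq_zero_or_pos ℓ.val with h0 | h1
    · rw [show ℓ = ⟨0, ℓ.pos⟩ from Fin.ext h0, hs.1]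
    · rcases hs.2 ℓ h1 with h | ⟨k, hk, h⟩
      · omega
      · exact h ▸ ih k hk

section NonDiscEvent

variable {K n j : ℕ} {hjn : j ≤ n} {m : Fin n → ℕ} {s : Fin j → ℕ}
  {hsK : ∀ ℓ : Fin j, s ℓ - 1 < K}

lemma nonDiscEvent_subset_of_le {a b : Fin j} (hab : a ≤ b) (hs : s a = s b) :
    nonDiscEvent K n j hjn m s hsK b ⊆ nonDiscEvent K n j hjn m s hsK a := by
  intro W hW ℓ hℓ hne
  have hrow : (⟨s a - 1, hsK a⟩ : Fin K) = ⟨s b - 1, hsK b⟩ := Fin.ext (by simp [hs])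
  exact hrow ▸ hW ℓ (lt_of_lt_of_le hℓ hab) (hs ▸ hne)

lemma nonDiscEvent_eq_inter {p q : Fin j} (hpq : p ≤ q) (hs : s p = s q) :
    nonDiscEvent K n j hjn m s hsK q = nonDiscEvent K n j hjn m s hsK p ∩
      {W | ∀ ℓ, p ≤ ℓ ∧ ℓ < q ∧ s ℓ ≠ s q →
        W ⟨s q - 1, hsK q⟩ (Fin.castLE hjn ℓ) = W ⟨s ℓ - 1, hsK ℓ⟩ (Fin.castLE hjn ℓ)} := by
  refine subset_antisymm (fun W hW => ⟨nonDiscEvent_subset_of_le hpq hs hW,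
    fun ℓ hℓ => hW ℓ hℓ.2.1 hℓ.2.2⟩) ?_
  rintro W ⟨hWp, hWnew⟩ ℓ hℓq hne
  rcases lt_or_ge ℓ p with hℓp | hpℓ
  · have hrow : (⟨s p - 1, hsK p⟩ : Fin K) = ⟨s q - 1, hsK q⟩ := Fin.ext (by simp [hs])
    exact hrow ▸ hWp ℓ hℓp (hs ▸ hne)
  · exact hWnew ℓ ⟨hpℓ, hℓq, hne⟩

theorem card_nonDiscEvent_eq_mul (hs : IsPatternSeq j s) {p q : Fin j} (hpq : p ≤ q)
    (hsp : s p = s q) :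
    Nat.card (nonDiscEvent K n j hjn m s hsK p) = Nat.card (nonDiscEvent K n j hjn m s hsK q)
      * 2 ^ ∑ ℓ with p ≤ ℓ ∧ ℓ < q ∧ s ℓ ≠ s q, m (Fin.castLE hjn ℓ) := by
  set N : Finset (Fin j) := {ℓ | p ≤ ℓ ∧ ℓ < q ∧ s ℓ ≠ s q}
  let row : Fin j → Fin K := fun ℓ => ⟨s ℓ - 1, hsK ℓ⟩
  have hrow : ∀ ℓ, s ℓ ≠ s q → row ℓ ≠ row q := fun ℓ hne h => by
    have hval : s ℓ - 1 = s q - 1 := congrArg Fin.val h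
    have := hs.one_le ℓ
    have := hs.one_le q
    omega
  have hinj := Fin.castLE_injective hjn
  let σ : Fin n → Fin K := Function.extend (Fin.castLE hjn) row fun _ => row q
  have hσ : ∀ b ∈ N.map (Fin.castLEEmb hjn), σ b ≠ row q := by
    simp only [forall_mem_map]
    intro ℓ hℓ
    simp only [σ, Fin.coe_castLEEmb, hinj.extend_apply]
    exact hrow ℓ (mem_filter.mp hℓ).2.2.2
  have hfree : ∀ W ∈ nonDiscEvent K n j hjn m s hsK p, ∀ g,
      updateRowOn W (row q) (N.map (Fin.castLEEmb hjn)) g ∈ nonDiscEvent K n j hjn m s hsK p := by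
    intro W hW g ℓ hℓp hne
    have hℓN : Fin.castLE hjn ℓ ∉ N.map (Fin.castLEEmb hjn) := by
      simp [N, not_le.mpr hℓp]
    rw [updateRowOn_of_notMem _ hℓN, updateRowOn_of_notMem _ hℓN]
    exact hW ℓ hℓp hne
  have hcopies : {W : MsgTuple K n m | ∀ b ∈ N.map (Fin.castLEEmb hjn), W (row q) b = W (σ b) b}
      = {W | ∀ ℓ, p ≤ ℓ ∧ ℓ < q ∧ s ℓ ≠ s q →
          W (row q) (Fin.castLE hjn ℓ) = W (row ℓ) (Fin.castLE hjn ℓ)} := by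
    ext W
    simp only [Set.mem_ofPred_eq, forall_mem_map, σ, N, mem_filter, mem_univ, true_and]
    simp only [Fin.coe_castLEEmb, hinj.extend_apply]
  rw [card_eq_card_inter_copies_mul _ (row q) _ σ hσ hfree, hcopies,
    ← nonDiscEvent_eq_inter hpq hsp, prod_map]
  simp [prod_pow_eq_pow_sum, N]

end NonDiscEvent

theorem conditional_nondiscriminating_probability_general (K n j : ℕ)
    (hjn : j ≤ n)
    (m : Fin n → ℕ) (s : Fin j → ℕ) (hs : IsPatternSeq j s)
    (hsK : ∀ ℓ : Fin j, s ℓ - 1 < K)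
    (q : Fin j)
    (Q : Finset (Fin j)) (hQne : Q.Nonempty)
    (hQ : ∀ k ∈ Q, k < q ∧ 1 ≤ k.val ∧ s k = s q) :
    (⋂ k ∈ Q, nonDiscEvent K n j hjn m s hsK k)
        = nonDiscEvent K n j hjn m s hsK (Q.max' hQne) ∧
    nonDiscEvent K n j hjn m s hsK q ⊆ nonDiscEvent K n j hjn m s hsK (Q.max' hQne) ∧
    (Nat.card {W : MsgTuple K n m //
          W ∈ nonDiscEvent K n j hjn m s hsK q ∩ ⋂ k ∈ Q, nonDiscEvent K n j hjn m s hsK k} : ℚ)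
        / (Nat.card {W : MsgTuple K n m //
          W ∈ ⋂ k ∈ Q, nonDiscEvent K n j hjn m s hsK k} : ℚ)
      = (2 : ℚ) ^ (-(((∑ ℓ ∈ Finset.univ.filter (fun ℓ : Fin j => ℓ < q ∧ s ℓ ≠ s q),
              m (Fin.castLE hjn ℓ) : ℕ) : ℤ)
          - ((∑ k ∈ Finset.univ.filter
                (fun k : Fin j => k < Q.max' hQne ∧ s k ≠ s (Q.max' hQne)),
              m (Fin.castLE hjn k) : ℕ) : ℤ))) := by
  set A := nonDiscEvent K n j hjn m s hsK
  set p := Q.max' hQne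
  obtain ⟨hpq, -, hsp⟩ := hQ p (Q.max'_mem hQne)
  have hInter : ⋂ k ∈ Q, A k = A p :=
    (Set.biInter_subset_of_mem (Q.max'_mem hQne)).antisymm <| Set.subset_iInter₂ fun k hk =>
      nonDiscEvent_subset_of_le (Q.le_max' k hk) ((hQ k hk).2.2.trans hsp.symm)
  have hsub : A q ⊆ A p := nonDiscEvent_subset_of_le hpq.le hsp
  refine ⟨hInter, hsub, ?_⟩
  have hAq : Nat.card (A q) ≠ 0 :=
    Nat.card_ne_zero.mpr ⟨⟨⟨fun _ _ _ => 0, fun _ _ _ => rfl⟩⟩, inferInstance⟩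
  rw [hInter, Set.inter_eq_self_of_subset_left hsub]
  change (Nat.card (A q) : ℚ) / Nat.card (A p) = _
  rw [card_nonDiscEvent_eq_mul hs hpq.le hsp, sum_filter_lt_ne_eq_add s _ hpq.le hsp,
    Nat.cast_add, add_sub_cancel_left, zpow_neg, zpow_natCast, Nat.cast_mul, Nat.cast_pow,
    Nat.cast_ofNat, div_mul_cancel_left₀ (by exact_mod_cast hAq)]

/-- Lemma P1: for a nonempty `Q ⊆ {1,…,q-1}` with `s k = s q` for all `k ∈ Q` and
`p = max Q`, one has `⋂_{k∈Q} A_{k,s} = A_{p,s}`, `A_{q,s} ⊆ A_{p,s}`, and the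
conditional probability `Pr(A_{q,s} | ⋂_{k∈Q} A_{k,s})` equals
`2^(-(Σ_{ℓ<q, s ℓ≠s q} m ℓ - Σ_{k<p, s k≠s p} m k))`. -/
theorem conditional_nondiscriminating_probability (K n j : ℕ)
    (hj : 0 < j) (hjn : j ≤ n) (hnK : n ≤ K)
    (m : Fin n → ℕ) (s : Fin j → ℕ) (hs : IsPatternSeq j s)
    (hsK : ∀ ℓ : Fin j, s ℓ - 1 < K)
    (q : Fin j) (hq : 1 ≤ q.val)
    (Q : Finset (Fin j)) (hQne : Q.Nonempty)
    (hQ : ∀ k ∈ Q, k < q ∧ 1 ≤ k.val ∧ s k = s q) :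
    (⋂ k ∈ Q, nonDiscEvent K n j hjn m s hsK k)
        = nonDiscEvent K n j hjn m s hsK (Q.max' hQne) ∧
    nonDiscEvent K n j hjn m s hsK q ⊆ nonDiscEvent K n j hjn m s hsK (Q.max' hQne) ∧
    (Nat.card {W : MsgTuple K n m //
          W ∈ nonDiscEvent K n j hjn m s hsK q ∩ ⋂ k ∈ Q, nonDiscEvent K n j hjn m s hsK k} : ℚ)
        / (Nat.card {W : MsgTuple K n m //
          W ∈ ⋂ k ∈ Q, nonDiscEvent K n j hjn m s hsK k} : ℚ)
      = (2 : ℚ) ^ (-(((∑ ℓ ∈ Finset.univ.filter (fun ℓ : Fin j => ℓ < q ∧ s ℓ ≠ s q),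
              m (Fin.castLE hjn ℓ) : ℕ) : ℤ)
          - ((∑ k ∈ Finset.univ.filter
                (fun k : Fin j => k < Q.max' hQne ∧ s k ≠ s (Q.max' hQne)),
              m (Fin.castLE hjn k) : ℕ) : ℤ))) :=
  conditional_nondiscriminating_probability_general K n j hjn m s hs hsK q Q hQne hQ
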